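/- Let f:[a,b]→ℝ₊ be a nonnegative convex function, n a positive integer, h=(b−a)/n, x_k = a + k·h. Then for every y∈[a,b]: ∫_a^b f(x) dx − (b−a)·f(y) ≤ [h/2 + max_{1≤j≤n} |y − (x_{j−1}+x_j)/2|] · [f(a) + 2∑_{j=1}^{n−1} f(x_j) + f(b)]. -/

import Mathlib

/-!
On each cell `[x k, x (k + 1)]` a convex function lies below its chord, so integrating gives the
composite trapezoid bound `∫ f ≤ h / 2 * (f a + 2 * ∑ f (x k) + f b)`. As `f ≥ 0`, the terms
`(b - a) * f y` and `M * (f a + 2 * ∑ f (x k) + f b)` are nonnegative, which gives the theorem.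
-/

open MeasureTheory Finset

namespace ConvexOn

open Set

variable {f : ℝ → ℝ} {a b : ℝ}

theorem le_chord (hf : ConvexOn ℝ (Icc a b) f) {t : ℝ} (ht : t ∈ Icc a b) (hab : a < b) :
    f t ≤ ((b - t) * f a + (t - a) * f b) / (b - a) := by
  have hba : 0 < b - a := sub_pos.2 hab
  have key := hf.2 (left_mem_Icc.2 hab.le) (right_mem_Icc.2 hab.le)
    (div_nonneg (sub_nonneg.2 ht.2) hba.le) (div_nonneg (sub_nonneg.2 ht.1) hba.le)
    (by field_simp; ring)
  have hpt : ((b - t) / (b - a)) • a + ((t - a) / (b - a)) • b = t := by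
    simp only [smul_eq_mul]; field_simp; ring
  rw [hpt] at key
  calc f t ≤ ((b - t) / (b - a)) • f a + ((t - a) / (b - a)) • f b := key
    _ = _ := by simp only [smul_eq_mul]; field_simp

/-- The lower bound comes from reflecting `t` through the midpoint `m`:
`f m ≤ (f t + f (a + b - t)) / 2`. -/
theorem abs_le_of_mem_Icc (hf : ConvexOn ℝ (Icc a b) f) {t : ℝ} (ht : t ∈ Icc a b) :
    |f t| ≤ 2 * |f ((a + b) / 2)| + |f a| + |f b| := by
  have hab : a ≤ b := ht.1.trans ht.2
  have hmax : ∀ s ∈ Icc a b, f s ≤ |f a| + |f b| := fun s hs =>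
    (hf.le_on_segment (left_mem_Icc.2 hab) (right_mem_Icc.2 hab)
      (by rwa [segment_eq_Icc hab])).trans
      (max_le ((le_abs_self _).trans (le_add_of_nonneg_right (abs_nonneg _)))
        ((le_abs_self _).trans (le_add_of_nonneg_left (abs_nonneg _))))
  have ht' : a + b - t ∈ Icc a b := ⟨by linarith [ht.2], by linarith [ht.1]⟩
  have hmid : f ((a + b) / 2) ≤ (f t + f (a + b - t)) / 2 :=
    calc f ((a + b) / 2) = f ((1 / 2 : ℝ) • t + (1 / 2 : ℝ) • (a + b - t)) := by
          simp only [smul_eq_mul]; ring_nf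
      _ ≤ (1 / 2 : ℝ) • f t + (1 / 2 : ℝ) • f (a + b - t) :=
          hf.2 ht ht' (by norm_num) (by norm_num) (by norm_num)
      _ = (f t + f (a + b - t)) / 2 := by simp only [smul_eq_mul]; ring
  rw [abs_le]
  constructor
  · linarith [neg_abs_le (f ((a + b) / 2)), hmax _ ht', abs_nonneg (f a), abs_nonneg (f b)]
  · linarith [hmax t ht, abs_nonneg (f ((a + b) / 2))]

theorem intervalIntegrable (hf : ConvexOn ℝ (Icc a b) f) (hab : a ≤ b) :
    IntervalIntegrable f volume a b := by
  have hcont : ContinuousOn f (Ioo a b) := by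
    simpa only [interior_Icc] using hf.continuousOn_interior
  rw [intervalIntegrable_iff_integrableOn_Ioo_of_le hab]
  refine IntegrableOn.of_bound measure_Ioo_lt_top
    (hcont.aestronglyMeasurable measurableSet_Ioo) (2 * |f ((a + b) / 2)| + |f a| + |f b|) ?_
  filter_upwards [ae_restrict_mem measurableSet_Ioo] with t ht
  exact hf.abs_le_of_mem_Icc (Ioo_subset_Icc_self ht)

theorem integral_le_trapezoid (hf : ConvexOn ℝ (Icc a b) f) (hab : a ≤ b) :
    ∫ t in a..b, f t ≤ (b - a) * (f a + f b) / 2 := by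
  rcases hab.eq_or_lt with rfl | hlt
  · simp
  set chord : ℝ → ℝ := fun t => ((b - t) * f a + (t - a) * f b) / (b - a)
  have hchord : Continuous chord := by fun_prop
  calc ∫ t in a..b, f t ≤ ∫ t in a..b, chord t :=
        intervalIntegral.integral_mono_on hab (hf.intervalIntegrable hab)
          (hchord.intervalIntegrable _ _) fun t ht => hf.le_chord ht hlt
    _ = (b - a) * (f a + f b) / 2 := by
        simp only [chord, intervalIntegral.integral_div]
        rw [intervalIntegral.integral_add ((by fun_prop : Continuous _).intervalIntegrable _ _)
            ((by fun_prop : Continuous _).intervalIntegrable _ _),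
          intervalIntegral.integral_mul_const, intervalIntegral.integral_mul_const]
        simp [intervalIntegral.integral_comp_sub_left (fun x => x), intervalIntegral.integral_sub,
          integral_id]
        field_simp
        ring

theorem integral_le_sum_trapezoid {x : ℕ → ℝ} (hx : Monotone x) {n : ℕ}
    (hf : ConvexOn ℝ (Icc (x 0) (x n)) f) :
    ∫ t in x 0..x n, f t ≤
      ∑ k ∈ range n, (x (k + 1) - x k) * (f (x k) + f (x (k + 1))) / 2 := by
  have hpiece : ∀ k < n, ConvexOn ℝ (Icc (x k) (x (k + 1))) f := fun k hk =>
    hf.subset (Icc_subset_Icc (hx (Nat.zero_le k)) (hx hk)) (convex_Icc _ _)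
  rw [← intervalIntegral.sum_integral_adjacent_intervals fun k hk =>
    (hpiece k hk).intervalIntegrable (hx k.le_succ)]
  exact Finset.sum_le_sum fun k hk =>
    (hpiece k (mem_range.1 hk)).integral_le_trapezoid (hx k.le_succ)

end ConvexOn

theorem Finset.sum_range_add_succ {R : Type*} [CommSemiring R] {n : ℕ} (hn : 0 < n)
    (g : ℕ → R) :
    ∑ k ∈ range n, (g k + g (k + 1)) = g 0 + 2 * ∑ k ∈ Ico 1 n, g k + g n := by
  obtain ⟨m, rfl⟩ := Nat.exists_eq_add_of_lt hn
  rw [sum_add_distrib, sum_range_succ' g, sum_range_succ (fun k => g (k + 1)), sum_Ico_eq_sum_range]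
  simp only [zero_add, Nat.add_sub_cancel, add_comm 1]
  ring

theorem ostrowski_convex_max_midpoint_general
    (a b : ℝ) (f : ℝ → ℝ)
    (hf : ConvexOn ℝ (Set.Icc a b) f)
    (hpos : ∀ t ∈ Set.Icc a b, 0 ≤ f t)
    (n : ℕ)
    (h : ℝ) (hh : h = (b - a) / n)
    (x : ℕ → ℝ) (hx : ∀ k, x k = a + k * h)
    (y : ℝ) (hy : y ∈ Set.Icc a b)
    (M : ℝ) (hM : IsGreatest ((fun j => |y - (x j + x (j + 1)) / 2|) '' Set.Iio n) M) :
    (∫ t in a..b, f t) - (b - a) * f y ≤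
      (h / 2 + M) * (f a + 2 * ∑ k ∈ Finset.Ico 1 n, f (x k) + f b) := by
  obtain ⟨j, hj, -⟩ := hM.1
  have hn : 0 < n := Nat.zero_lt_of_lt hj
  have hab : a ≤ b := hy.1.trans hy.2
  have hh0 : 0 ≤ h := hh ▸ div_nonneg (sub_nonneg.2 hab) n.cast_nonneg
  have hx0 : x 0 = a := by simp [hx]
  have hxn : x n = b := by rw [hx, hh]; field_simp; ring
  have hxmono : Monotone x := fun i k hik => by simp only [hx]; gcongr
  have hxmem : ∀ k ≤ n, x k ∈ Set.Icc a b := fun k hk => hx0 ▸ hxn ▸ ⟨hxmono k.zero_le, hxmono hk⟩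
  have htrap : ∫ t in a..b, f t ≤ h / 2 * (f a + 2 * ∑ k ∈ Ico 1 n, f (x k) + f b) := by
    have hstep : ∀ k, x (k + 1) - x k = h := fun k => by simp only [hx]; push_cast; ring
    have := (hx0 ▸ hxn ▸ hf).integral_le_sum_trapezoid hxmono
    simp only [hstep, mul_div_assoc, ← Finset.mul_sum, ← Finset.sum_div,
      Finset.sum_range_add_succ hn, hx0, hxn] at this
    linarith
  have hS : 0 ≤ f a + 2 * ∑ k ∈ Ico 1 n, f (x k) + f b := by
    have := Finset.sum_nonneg fun k (hk : k ∈ Ico 1 n) => hpos _ (hxmem k (mem_Ico.1 hk).2.le)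
    linarith [hpos a (Set.left_mem_Icc.2 hab), hpos b (Set.right_mem_Icc.2 hab)]
  have hM0 : 0 ≤ M := (abs_nonneg _).trans (hM.2 (Set.mem_image_of_mem _ hj))
  calc (∫ t in a..b, f t) - (b - a) * f y ≤ ∫ t in a..b, f t :=
        sub_le_self _ (mul_nonneg (sub_nonneg.2 hab) (hpos y hy))
    _ ≤ h / 2 * (f a + 2 * ∑ k ∈ Ico 1 n, f (x k) + f b) := htrap
    _ ≤ (h / 2 + M) * (f a + 2 * ∑ k ∈ Ico 1 n, f (x k) + f b) := by gcongr; linarith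

theorem ostrowski_convex_max_midpoint
    (a b : ℝ) (hab : a < b) (f : ℝ → ℝ)
    (hf : ConvexOn ℝ (Set.Icc a b) f)
    (hpos : ∀ t ∈ Set.Icc a b, 0 ≤ f t)
    (n : ℕ) (hn : 1 ≤ n)
    (h : ℝ) (hh : h = (b - a) / n)
    (x : ℕ → ℝ) (hx : ∀ k, x k = a + k * h)
    (y : ℝ) (hy : y ∈ Set.Icc a b)
    (M : ℝ) (hM : IsGreatest ((fun j => |y - (x j + x (j + 1)) / 2|) '' Set.Iio n) M) :
    (∫ t in a..b, f t) - (b - a) * f y ≤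
      (h / 2 + M) * (f a + 2 * ∑ k ∈ Finset.Ico 1 n, f (x k) + f b) :=
  ostrowski_convex_max_midpoint_general a b f hf hpos n h hh x hx y hy M hM
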